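/- Assume β̃ > 0 and let σ be a real m×m matrix. Then for every p > 1 there exist δ ∈ (0,1], a positive constant C̃₀', and a compact set K' ⊂ ℝ^m such that ℒ^u 𝒱_{p,δ}(x) ≤ C̃₀' 1_{K'}(x) - p δ (3β̃/(4m)) 𝒱_{p-1,δ}(x) for all x ∈ ℝ^m and all u ∈ Δ, where ℒ^u f(x) = (1/2) trace(σσᵀ ∇²f(x)) + ⟨b̃(x,u), ∇f(x)⟩. -/

import Mathlib

open scoped BigOperators
open MeasureTheory

/-!
Write `𝒱_{p,δ} = F ^ p` with `F x = ∑ i, φ_δ(x_i)/μ_i + m / min μ` and `φ_δ(t) = δ²ψ(-t) + ψ(δt)`.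
Since `ψ ≥ -1/2`, `F ≥ m / (4 min μ) > 0` for `δ ≤ 1/2`, so `F ^ p` is twice differentiable and
`ℒ^u 𝒱 = p F^(p-1) [(p-1)/(2F) ⟨∇F, σσᵀ∇F⟩ + ½ tr(σσᵀ ∇²F) + ⟨b̃, ∇F⟩]`. As `ψ'` and `ψ''` are
bounded, the two second-order terms are `O(δ²)`. For the drift term: if `∑ x_i > 0`, some
coordinate is positive, where `ψ'(δ x_i) = 1`, and `⟨b̃, ∇F⟩ ≤ (β̃ + m)δ² - β̃δ/m`;
if `∑ x_i ≤ 0`, the negative part dominates and `⟨b̃, ∇F⟩ ≤ (β̃ + m)δ² + 4m/9 - δ²‖x‖₁/2`.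
Taking `δ` small lets the first bound beat `3β̃δ/(4m) + O(δ²)`; the second does so outside a large
`ℓ¹`-ball `K`, and on `K` everything is bounded.
-/

noncomputable section

/-- The piecewise function `ψ` from Definition 1 of the paper. -/
def psi (t : ℝ) : ℝ :=
  if t ≤ -1 then -(1/2)
  else if t ≤ 0 then (t+1)^3 - (1/2)*(t+1)^4 - 1/2
  else t

/-- `Ψ(x) = ∑ i, ψ(x_i)/μ_i`. -/
def Psi (m : ℕ) (μ : Fin m → ℝ) (x : Fin m → ℝ) : ℝ := ∑ i, psi (x i) / μ i

/-- `Ψ_δ(x) = ∑ i, ψ(δ x_i)/μ_i`. -/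
def Psid (m : ℕ) (μ : Fin m → ℝ) (δ : ℝ) (x : Fin m → ℝ) : ℝ :=
  ∑ i, psi (δ * x i) / μ i

/-- The scaled Lyapunov function
`𝒱_{p,δ}(x) = (δ² Ψ(-x) + Ψ_δ(x) + m / min_i μ_i)^p`. -/
def Vpd (m : ℕ) (μ : Fin m → ℝ) (δ p : ℝ) (x : Fin m → ℝ) : ℝ :=
  (δ ^ 2 * Psi m μ (-x) + Psid m μ δ x + (m : ℝ) / ⨅ i, μ i) ^ p

/-- The drift `b̃(x,u) = -(β̃/m) M e - M (x - ⟨e,x⟩⁺ u) - ⟨e,x⟩⁺ Γ u`, written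
componentwise, where `M = diag(μ)` and `Γ = diag(γ)`. -/
def drift (m : ℕ) (μ γ : Fin m → ℝ) (β : ℝ) (x u : Fin m → ℝ) : Fin m → ℝ :=
  fun i => -(β / (m : ℝ)) * μ i - μ i * (x i - max (∑ j, x j) 0 * u i)
    - max (∑ j, x j) 0 * (γ i * u i)

/-- `trace(A ∇²f(x)) = ∑ i j, A_{ij} ∂_i ∂_j f(x)`. -/
def traceHess (m : ℕ) (A : Matrix (Fin m) (Fin m) ℝ) (f : (Fin m → ℝ) → ℝ)
    (x : Fin m → ℝ) : ℝ :=
  ∑ i, ∑ j, A i j *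
    fderiv ℝ (fun y => fderiv ℝ f y (Pi.single i (1 : ℝ))) x (Pi.single j (1 : ℝ))

open Filter Topology Set

theorem HasDerivAt.ite_le {f g f' g' : ℝ → ℝ} {a : ℝ}
    (hf : ∀ t, HasDerivAt f (f' t) t) (hg : ∀ t, HasDerivAt g (g' t) t)
    (hfg : f a = g a) (hfg' : f' a = g' a) (t : ℝ) :
    HasDerivAt (fun t => if t ≤ a then f t else g t) (if t ≤ a then f' t else g' t) t := by
  rcases lt_trichotomy t a with h | h | h
  · rw [if_pos h.le]
    refine (hf t).congr_of_eventuallyEq ?_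
    filter_upwards [Iio_mem_nhds h] with y hy using if_pos hy.le
  · rw [h, if_pos le_rfl]
    have hle : HasDerivWithinAt (fun t => if t ≤ a then f t else g t) (f' a) (Iic a) a :=
      (hf a).hasDerivWithinAt.congr (fun y hy => if_pos hy) (if_pos le_rfl)
    have hge : HasDerivWithinAt (fun t => if t ≤ a then f t else g t) (f' a) (Ici a) a :=
      (hfg' ▸ hg a).hasDerivWithinAt.congr
        (fun y (hy : a ≤ y) => by
          rcases hy.eq_or_lt with rfl | hy; exacts [by simp [hfg], if_neg hy.not_ge])
        (by simp [hfg])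
    exact (hle.union hge).hasDerivAt (by simp)
  · rw [if_neg h.not_ge]
    refine (hg t).congr_of_eventuallyEq ?_
    filter_upwards [Ioi_mem_nhds h] with y hy using if_neg hy.not_ge

def psi' (t : ℝ) : ℝ :=
  if t ≤ -1 then 0
  else if t ≤ 0 then 3 * (t + 1) ^ 2 - 2 * (t + 1) ^ 3
  else 1

def psi'' (t : ℝ) : ℝ :=
  if t ≤ -1 then 0
  else if t ≤ 0 then 6 * (t + 1) - 6 * (t + 1) ^ 2
  else 0

theorem hasDerivAt_psi (t : ℝ) : HasDerivAt psi (psi' t) t := by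
  have hq (t : ℝ) : HasDerivAt (fun t => (t + 1) ^ 3 - 1 / 2 * (t + 1) ^ 4 - 1 / 2)
      (3 * (t + 1) ^ 2 - 2 * (t + 1) ^ 3) t := by
    have h : HasDerivAt (fun t : ℝ => t + 1) 1 t := (hasDerivAt_id t).add_const 1
    exact (((h.fun_pow 3).sub ((h.fun_pow 4).const_mul (1 / 2))).sub_const (1 / 2)).congr_deriv
      (by push_cast; ring)
  refine HasDerivAt.ite_le (fun t => hasDerivAt_const t _)
    (HasDerivAt.ite_le hq (fun t => hasDerivAt_id t) (by norm_num) (by norm_num)) ?_ ?_ t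
  all_goals norm_num

theorem hasDerivAt_psi' (t : ℝ) : HasDerivAt psi' (psi'' t) t := by
  have hq (t : ℝ) : HasDerivAt (fun t => 3 * (t + 1) ^ 2 - 2 * (t + 1) ^ 3)
      (6 * (t + 1) - 6 * (t + 1) ^ 2) t := by
    have h : HasDerivAt (fun t : ℝ => t + 1) 1 t := (hasDerivAt_id t).add_const 1
    exact (((h.fun_pow 2).const_mul 3).sub ((h.fun_pow 3).const_mul 2)).congr_deriv
      (by push_cast; ring)
  refine HasDerivAt.ite_le (fun t => hasDerivAt_const t _)
    (HasDerivAt.ite_le hq (fun t => hasDerivAt_const t _) (by norm_num) (by norm_num)) ?_ ?_ t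
  all_goals norm_num

theorem psi'_nonneg (t : ℝ) : 0 ≤ psi' t := by
  unfold psi'
  split_ifs with h₁ h₂
  · exact le_rfl
  · nlinarith [mul_nonneg (sq_nonneg (t + 1)) (by linarith : (0 : ℝ) ≤ 1 - 2 * t)]
  · exact zero_le_one

theorem psi'_le_one (t : ℝ) : psi' t ≤ 1 := by
  unfold psi'
  split_ifs with h₁ h₂
  · exact zero_le_one
  · nlinarith [mul_nonneg (sq_nonneg t) (by linarith : (0 : ℝ) ≤ 2 * t + 3)]
  · exact le_rfl

theorem psi'_of_nonneg {t : ℝ} (ht : 0 ≤ t) : psi' t = 1 := by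
  rcases ht.eq_or_lt with rfl | ht
  · norm_num [psi']
  · simp [psi', ht.not_ge, (by linarith : ¬ t ≤ -1)]

theorem psi''_le (t : ℝ) : psi'' t ≤ 3 / 2 := by
  unfold psi''
  split_ifs
  · norm_num
  · nlinarith [sq_nonneg (2 * t + 1)]
  · norm_num

theorem neg_half_le_psi (t : ℝ) : -(1 / 2) ≤ psi t := by
  unfold psi
  split_ifs with h₁ h₂
  · exact le_rfl
  · have h : 0 ≤ t + 1 := by linarith
    nlinarith [pow_nonneg h 3, mul_nonneg (pow_nonneg h 3) (by linarith : (0 : ℝ) ≤ -t)]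
  · linarith

theorem psi_le_max (t : ℝ) : psi t ≤ max t 0 := by
  unfold psi
  split_ifs with h₁ h₂
  · linarith [le_max_right t 0]
  · have h : 0 ≤ t + 1 := by linarith
    nlinarith [le_max_right t 0, mul_nonneg (pow_nonneg h 3) (by linarith : (0 : ℝ) ≤ -t),
      mul_nonneg (mul_nonneg (sq_nonneg t) (by linarith : (0 : ℝ) ≤ -t)) h]
  · exact le_max_left t 0

theorem mul_psi'_neg_le {s : ℝ} (hs : 0 ≤ s) : s * psi' (-s) ≤ 4 / 9 := by
  unfold psi'
  split_ifs with h₁ h₂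
  · norm_num
  · nlinarith [mul_nonneg (sq_nonneg (1 - 3 * s)) (by linarith : (0 : ℝ) ≤ 4 - 3 * s),
      mul_nonneg (mul_nonneg hs (by linarith : (0 : ℝ) ≤ 1 - s)) (by linarith : (0 : ℝ) ≤ 1 - s)]
  · linarith

def phi (δ t : ℝ) : ℝ := δ ^ 2 * psi (-t) + psi (δ * t)

def phi' (δ t : ℝ) : ℝ := δ * psi' (δ * t) - δ ^ 2 * psi' (-t)

def phi'' (δ t : ℝ) : ℝ := δ ^ 2 * psi'' (δ * t) + δ ^ 2 * psi'' (-t)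

section Phi

variable {δ : ℝ}

theorem hasDerivAt_phi (δ t : ℝ) : HasDerivAt (phi δ) (phi' δ t) t := by
  have h₁ := (hasDerivAt_psi (-t)).comp t (hasDerivAt_neg t)
  have h₂ := (hasDerivAt_psi (δ * t)).comp t ((hasDerivAt_id t).const_mul δ)
  exact ((h₁.const_mul (δ ^ 2)).add h₂).congr_deriv (by simp only [phi']; ring)

theorem hasDerivAt_phi' (δ t : ℝ) : HasDerivAt (phi' δ) (phi'' δ t) t := by
  have h₁ := (hasDerivAt_psi' (δ * t)).comp t ((hasDerivAt_id t).const_mul δ)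
  have h₂ := (hasDerivAt_psi' (-t)).comp t (hasDerivAt_neg t)
  exact ((h₁.const_mul δ).sub (h₂.const_mul (δ ^ 2))).congr_deriv (by simp only [phi'']; ring)

theorem neg_le_phi (t : ℝ) : -(1 + δ ^ 2) / 2 ≤ phi δ t := by
  have := neg_half_le_psi (-t)
  have := neg_half_le_psi (δ * t)
  unfold phi
  nlinarith [sq_nonneg δ]

theorem phi_le_abs (hδ₀ : 0 ≤ δ) (hδ₁ : δ ≤ 1) (t : ℝ) : phi δ t ≤ |t| := by
  have h₁ := psi_le_max (-t)
  have h₂ := psi_le_max (δ * t)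
  have hδ2 : δ ^ 2 ≤ 1 := pow_le_one₀ hδ₀ hδ₁
  unfold phi
  rcases le_total 0 t with ht | ht
  · rw [max_eq_right (by linarith)] at h₁
    rw [max_eq_left (mul_nonneg hδ₀ ht)] at h₂
    nlinarith [abs_of_nonneg ht]
  · rw [max_eq_left (by linarith)] at h₁
    rw [max_eq_right (mul_nonpos_of_nonneg_of_nonpos hδ₀ ht)] at h₂
    nlinarith [abs_of_nonpos ht]

theorem phi'_le (hδ : 0 ≤ δ) (t : ℝ) : phi' δ t ≤ δ := by
  unfold phi'
  nlinarith [psi'_le_one (δ * t), mul_nonneg (sq_nonneg δ) (psi'_nonneg (-t))]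

theorem neg_sq_le_phi' (hδ : 0 ≤ δ) (t : ℝ) : -δ ^ 2 ≤ phi' δ t := by
  unfold phi'
  nlinarith [psi'_le_one (-t), mul_nonneg hδ (psi'_nonneg (δ * t)), sq_nonneg δ]

theorem abs_phi'_le (hδ₀ : 0 ≤ δ) (hδ₁ : δ ≤ 1) (t : ℝ) : |phi' δ t| ≤ δ :=
  abs_le.2 ⟨by nlinarith [neg_sq_le_phi' hδ₀ t], phi'_le hδ₀ t⟩

theorem phi''_le (t : ℝ) : phi'' δ t ≤ 3 * δ ^ 2 := by
  unfold phi''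
  nlinarith [psi''_le (δ * t), psi''_le (-t), sq_nonneg δ]

theorem neg_mul_phi'_le (hδ₀ : 0 ≤ δ) (t : ℝ) :
    -t * phi' δ t ≤ min (δ * t⁻) (4 / 9) - δ * t⁺ - δ ^ 2 * t⁻ + δ ^ 2 := by
  unfold phi'
  rcases le_total 0 t with ht | ht
  · rw [posPart_eq_self.2 ht, negPart_eq_zero.2 ht, psi'_of_nonneg (mul_nonneg hδ₀ ht), mul_zero,
      min_eq_left (by norm_num)]
    have h : t * psi' (-t) ≤ 1 := (mul_psi'_neg_le ht).trans (by norm_num)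
    nlinarith [mul_le_mul_of_nonneg_left h (sq_nonneg δ)]
  · rw [posPart_eq_zero.2 ht, negPart_eq_neg.2 ht, psi'_of_nonneg (by linarith : 0 ≤ -t)]
    have hs : 0 ≤ δ * -t := mul_nonneg hδ₀ (by linarith)
    have key : -t * (δ * psi' (δ * t)) ≤ min (δ * -t) (4 / 9) := by
      refine le_min (by nlinarith [psi'_le_one (δ * t)]) ?_
      simpa [mul_comm, mul_left_comm, mul_assoc] using mul_psi'_neg_le hs
    nlinarith

theorem phi'_mul_one_sub_le (hδ : 0 ≤ δ) {r : ℝ} (hr₀ : 0 ≤ r) (hr : δ * (1 + r) ≤ 1)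
    (t : ℝ) : phi' δ t * (1 - r) ≤ δ := by
  rcases le_total r 1 with h | h
  · nlinarith [mul_le_mul_of_nonneg_right (phi'_le hδ t) (sub_nonneg.2 h)]
  · nlinarith [mul_le_mul_of_nonpos_right (neg_sq_le_phi' hδ t) (sub_nonpos.2 h)]

end Phi

section SeparableGradient

variable {ι : Type*} [Fintype ι]

def dotCLM (g : ι → ℝ) : (ι → ℝ) →L[ℝ] ℝ := ∑ i, g i • ContinuousLinearMap.proj i

@[simp]
theorem dotCLM_apply (g v : ι → ℝ) : dotCLM g v = ∑ i, g i * v i := by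
  simp [dotCLM]

theorem hasFDerivAt_sum_apply {f f' : ι → ℝ → ℝ}
    (hf : ∀ i t, HasDerivAt (f i) (f' i t) t) (x : ι → ℝ) :
    HasFDerivAt (fun y => ∑ i, f i (y i)) (dotCLM fun i => f' i (x i)) x :=
  HasFDerivAt.fun_sum fun i _ => (hf i (x i)).comp_hasFDerivAt x (hasFDerivAt_apply i x)

variable {φ φ' φ'' : ℝ → ℝ}

theorem fderiv_comp_apply_eq {F : (ι → ℝ) → ℝ} {f' : ι → ℝ → ℝ} {x : ι → ℝ}
    (hF : HasFDerivAt F (dotCLM fun i => f' i (x i)) x) (hφ : HasDerivAt φ (φ' (F x)) (F x))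
    (v : ι → ℝ) :
    fderiv ℝ (fun y => φ (F y)) x v = φ' (F x) * ∑ i, f' i (x i) * v i := by
  rw [(show HasFDerivAt (fun y => φ (F y)) _ x from hφ.comp_hasFDerivAt x hF).fderiv]
  simp

theorem traceHess_comp_eq {m : ℕ} {F : (Fin m → ℝ) → ℝ} {f' f'' : Fin m → ℝ → ℝ}
    (A : Matrix (Fin m) (Fin m) ℝ)
    (hF : ∀ y, HasFDerivAt F (dotCLM fun i => f' i (y i)) y)
    (hf' : ∀ i t, HasDerivAt (f' i) (f'' i t) t) (hφ : ∀ y, HasDerivAt φ (φ' (F y)) (F y))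
    {x : Fin m → ℝ} (hφ' : HasDerivAt φ' (φ'' (F x)) (F x)) :
    traceHess m A (fun y => φ (F y)) x =
      φ'' (F x) * ∑ i, ∑ j, A i j * f' i (x i) * f' j (x j)
        + φ' (F x) * ∑ i, A i i * f'' i (x i) := by
  have hpartial (i : Fin m) : (fun y => fderiv ℝ (fun y => φ (F y)) y (Pi.single i 1)) =
      fun y => φ' (F y) * f' i (y i) := by
    ext y
    simp [fderiv_comp_apply_eq (hF y) (hφ y), Pi.single_apply]
  have hsecond (i j : Fin m) :
      fderiv ℝ (fun y => φ' (F y) * f' i (y i)) x (Pi.single j 1) =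
        φ'' (F x) * f' j (x j) * f' i (x i) + if i = j then φ' (F x) * f'' i (x i) else 0 := by
    have h := (hφ'.comp_hasFDerivAt x (hF x)).mul
      ((hf' i (x i)).comp_hasFDerivAt x (hasFDerivAt_apply i x))
    simp only [(show HasFDerivAt (fun y => φ' (F y) * f' i (y i)) _ x from h).fderiv]
    simp [Pi.single_apply]
    ring
  simp only [traceHess, hpartial, hsecond, mul_add, mul_ite, mul_zero, Finset.sum_add_distrib,
    Finset.sum_ite_eq, Finset.mem_univ, if_true, Finset.mul_sum]
  congr 1
  all_goals refine Finset.sum_congr rfl fun i _ => ?_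
  · exact Finset.sum_congr rfl fun j _ => by ring
  · ring

end SeparableGradient

theorem ciInf_pos_of_finite {ι : Type*} [Finite ι] [Nonempty ι] {f : ι → ℝ} (hf : ∀ i, 0 < f i) :
    0 < ⨅ i, f i := by
  obtain ⟨i, hi⟩ := exists_eq_ciInf_of_finite (f := f)
  exact hi ▸ hf i

-- `Vpd m μ δ p x = lyapBase m μ δ x ^ p` holds by `rfl`.
def lyapBase (m : ℕ) (μ : Fin m → ℝ) (δ : ℝ) (x : Fin m → ℝ) : ℝ :=
  δ ^ 2 * Psi m μ (-x) + Psid m μ δ x + (m : ℝ) / ⨅ i, μ i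

section LyapBase

variable {m : ℕ} {μ : Fin m → ℝ} {δ : ℝ}

theorem lyapBase_eq_sum (x : Fin m → ℝ) :
    lyapBase m μ δ x = ∑ i, phi δ (x i) / μ i + (m : ℝ) / ⨅ i, μ i := by
  simp only [lyapBase, Psi, Psid, phi, Finset.mul_sum, ← Finset.sum_add_distrib, Pi.neg_apply,
    add_div, mul_div_assoc]

theorem hasFDerivAt_lyapBase (x : Fin m → ℝ) :
    HasFDerivAt (lyapBase m μ δ) (dotCLM fun i => phi' δ (x i) / μ i) x := by
  rw [show lyapBase m μ δ = _ from funext lyapBase_eq_sum]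
  exact (hasFDerivAt_sum_apply (fun i t => (hasDerivAt_phi δ t).div_const (μ i)) x).add_const _

theorem lyapBase_ge [NeZero m] (hμ : ∀ i, 0 < μ i) (hδ₀ : 0 ≤ δ) (hδ : δ ≤ 1 / 2) (x : Fin m → ℝ) :
    m / (4 * ⨅ i, μ i) ≤ lyapBase m μ δ x := by
  set μm := ⨅ i, μ i
  have hμm : 0 < μm := ciInf_pos_of_finite hμ
  have hterm (i : Fin m) : -(3 / 4) / μm ≤ phi δ (x i) / μ i := by
    have hphi : -(3 / 4) ≤ phi δ (x i) := by nlinarith [neg_le_phi (δ := δ) (x i)]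
    calc -(3 / 4) / μm ≤ -(3 / 4) / μ i := by
          rw [neg_div, neg_div, neg_le_neg_iff]
          exact div_le_div_of_nonneg_left (by norm_num) hμm (ciInf_le (Finite.bddBelow_range μ) i)
      _ ≤ phi δ (x i) / μ i := div_le_div_of_nonneg_right hphi (hμ i).le
  have hsum := Finset.sum_le_sum fun i (_ : i ∈ Finset.univ) => hterm i
  simp only [Finset.sum_const, Finset.card_univ, Fintype.card_fin, nsmul_eq_mul] at hsum
  rw [lyapBase_eq_sum]
  have : (m : ℝ) / (4 * μm) = m * (-(3 / 4) / μm) + m / μm := by field_simp; ring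
  linarith

theorem lyapBase_pos [NeZero m] (hμ : ∀ i, 0 < μ i) (hδ₀ : 0 ≤ δ) (hδ : δ ≤ 1 / 2)
    (x : Fin m → ℝ) : 0 < lyapBase m μ δ x := by
  have : (0 : ℝ) < m := Nat.cast_pos.2 (NeZero.pos m)
  have := ciInf_pos_of_finite hμ
  exact (by positivity : (0 : ℝ) < m / (4 * ⨅ i, μ i)).trans_le (lyapBase_ge hμ hδ₀ hδ x)

theorem lyapBase_le [NeZero m] (hμ : ∀ i, 0 < μ i) (hδ₀ : 0 ≤ δ) (hδ₁ : δ ≤ 1) (x : Fin m → ℝ) :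
    lyapBase m μ δ x ≤ (∑ i, |x i| + m) / ⨅ i, μ i := by
  set μm := ⨅ i, μ i
  have hμm : 0 < μm := ciInf_pos_of_finite hμ
  have hterm (i : Fin m) : phi δ (x i) / μ i ≤ |x i| / μm :=
    (div_le_div_of_nonneg_right (phi_le_abs hδ₀ hδ₁ (x i)) (hμ i).le).trans
      (div_le_div_of_nonneg_left (abs_nonneg _) hμm (ciInf_le (Finite.bddBelow_range μ) i))
  rw [lyapBase_eq_sum, add_div, Finset.sum_div]
  exact add_le_add (Finset.sum_le_sum fun i _ => hterm i) le_rfl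

theorem lyapBase_rpow_le [NeZero m] (hμ : ∀ i, 0 < μ i) (hδ₀ : 0 ≤ δ) (hδ : δ ≤ 1 / 2)
    {q R : ℝ} (hq : 0 ≤ q) {x : Fin m → ℝ} (hx : ∑ i, |x i| ≤ R) :
    lyapBase m μ δ x ^ q ≤ ((R + m) / ⨅ i, μ i) ^ q := by
  have := ciInf_pos_of_finite hμ
  refine Real.rpow_le_rpow (lyapBase_pos hμ hδ₀ hδ x).le
    ((lyapBase_le hμ hδ₀ (by linarith) x).trans ?_) hq
  gcongr

end LyapBase

theorem Matrix.sum_sum_mul_mul_le {ι : Type*} [Fintype ι] (a : Matrix ι ι ℝ) {v : ι → ℝ} {c : ℝ}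
    (hv : ∀ i, |v i| ≤ c) : ∑ i, ∑ j, a i j * v i * v j ≤ (∑ i, ∑ j, |a i j|) * c ^ 2 := by
  simp only [Finset.sum_mul]
  refine Finset.sum_le_sum fun i _ => Finset.sum_le_sum fun j _ => ?_
  calc a i j * v i * v j ≤ |a i j| * |v i| * |v j| := by
        simpa only [abs_mul] using le_abs_self (a i j * v i * v j)
    _ ≤ |a i j| * c * c := by
        have := (abs_nonneg (v i)).trans (hv i)
        gcongr
        exacts [hv i, hv j]
    _ = |a i j| * c ^ 2 := by ring

section Vpd

variable {m : ℕ} {μ : Fin m → ℝ} {δ p : ℝ}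

theorem fderiv_Vpd_apply {x : Fin m → ℝ} (hx : lyapBase m μ δ x ≠ 0) (v : Fin m → ℝ) :
    fderiv ℝ (Vpd m μ δ p) x v =
      p * lyapBase m μ δ x ^ (p - 1) * ∑ i, phi' δ (x i) / μ i * v i :=
  fderiv_comp_apply_eq (f' := fun i t => phi' δ t / μ i) (φ := fun s => s ^ p)
    (φ' := fun s => p * s ^ (p - 1)) (hasFDerivAt_lyapBase x)
    (Real.hasDerivAt_rpow_const (Or.inl hx)) v

theorem traceHess_Vpd (a : Matrix (Fin m) (Fin m) ℝ) (hF : ∀ y, lyapBase m μ δ y ≠ 0)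
    (x : Fin m → ℝ) :
    traceHess m a (Vpd m μ δ p) x =
      p * ((p - 1) * lyapBase m μ δ x ^ (p - 1 - 1)) *
          ∑ i, ∑ j, a i j * (phi' δ (x i) / μ i) * (phi' δ (x j) / μ j)
        + p * lyapBase m μ δ x ^ (p - 1) * ∑ i, a i i * (phi'' δ (x i) / μ i) :=
  traceHess_comp_eq (φ := fun s => s ^ p) (φ' := fun s => p * s ^ (p - 1))
    (φ'' := fun s => p * ((p - 1) * s ^ (p - 1 - 1))) (x := x) a hasFDerivAt_lyapBase
    (fun i t => (hasDerivAt_phi' δ t).div_const (μ i))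
    (fun y => Real.hasDerivAt_rpow_const (Or.inl (hF y)))
    ((Real.hasDerivAt_rpow_const (Or.inl (hF x))).const_mul p)

end Vpd

theorem half_traceHess_Vpd_le {m : ℕ} [NeZero m] {μ : Fin m → ℝ} (hμ : ∀ i, 0 < μ i)
    {a : Matrix (Fin m) (Fin m) ℝ} (ha : ∀ i, 0 ≤ a i i) {p δ : ℝ} (hp : 1 ≤ p) (hδ₀ : 0 ≤ δ)
    (hδ : δ ≤ 1 / 2) (x : Fin m → ℝ) :
    1 / 2 * traceHess m a (Vpd m μ δ p) x ≤
      p * lyapBase m μ δ x ^ (p - 1) *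
        ((4 * (p - 1) * (∑ i, ∑ j, |a i j|) / m + 3 * ∑ i, a i i) / (2 * ⨅ i, μ i) * δ ^ 2) := by
  set μm := ⨅ i, μ i
  have hμm : 0 < μm := ciInf_pos_of_finite hμ
  have hμle (i : Fin m) : μm ≤ μ i := ciInf_le (Finite.bddBelow_range μ) i
  have hm : (0 : ℝ) < m := Nat.cast_pos.2 (NeZero.pos m)
  have hFpos := lyapBase_pos hμ hδ₀ hδ
  rw [traceHess_Vpd a (fun y => (hFpos y).ne') x]
  set F := lyapBase m μ δ x
  have hδ₁ : δ ≤ 1 := hδ.trans (by norm_num)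
  have hQ := a.sum_sum_mul_mul_le (v := fun i => phi' δ (x i) / μ i) (c := δ / μm) fun i => by
    rw [abs_div, abs_of_pos (hμ i)]
    exact div_le_div₀ hδ₀ (abs_phi'_le hδ₀ hδ₁ _) hμm (hμle i)
  have hD : ∑ i, a i i * (phi'' δ (x i) / μ i) ≤ (∑ i, a i i) * (3 * δ ^ 2 / μm) := by
    rw [Finset.sum_mul]
    exact Finset.sum_le_sum fun i _ => mul_le_mul_of_nonneg_left
      (div_le_div₀ (by positivity) (phi''_le _) hμm (hμle i)) (ha i)
  have hpow : F ^ (p - 1 - 1) ≤ F ^ (p - 1) * (4 * μm / m) := by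
    rw [Real.rpow_sub_one (hFpos x).ne', div_eq_mul_inv]
    refine mul_le_mul_of_nonneg_left ?_ (Real.rpow_nonneg (hFpos x).le _)
    rw [inv_le_comm₀ (hFpos x) (by positivity), inv_div]
    exact lyapBase_ge hμ hδ₀ hδ x
  have hp₀ : 0 ≤ p - 1 := by linarith
  calc 1 / 2 * (p * ((p - 1) * F ^ (p - 1 - 1)) *
          ∑ i, ∑ j, a i j * (phi' δ (x i) / μ i) * (phi' δ (x j) / μ j)
        + p * F ^ (p - 1) * ∑ i, a i i * (phi'' δ (x i) / μ i))
      ≤ 1 / 2 * (p * ((p - 1) * F ^ (p - 1 - 1)) * ((∑ i, ∑ j, |a i j|) * (δ / μm) ^ 2)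
        + p * F ^ (p - 1) * ((∑ i, a i i) * (3 * δ ^ 2 / μm))) := by
        have := (hFpos x).le
        gcongr
    _ ≤ 1 / 2 * (p * ((p - 1) * (F ^ (p - 1) * (4 * μm / m))) *
          ((∑ i, ∑ j, |a i j|) * (δ / μm) ^ 2)
        + p * F ^ (p - 1) * ((∑ i, a i i) * (3 * δ ^ 2 / μm))) := by
        gcongr
    _ = _ := by field_simp

theorem exists_generator_Vpd_le {m : ℕ} [NeZero m] {μ : Fin m → ℝ} (hμ : ∀ i, 0 < μ i)
    {a : Matrix (Fin m) (Fin m) ℝ} (ha : ∀ i, 0 ≤ a i i) {p : ℝ} (hp : 1 ≤ p) :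
    ∃ A, 0 ≤ A ∧ ∀ δ, 0 ≤ δ → δ ≤ 1 / 2 → ∀ x v : Fin m → ℝ,
      1 / 2 * traceHess m a (Vpd m μ δ p) x + fderiv ℝ (Vpd m μ δ p) x v ≤
        p * lyapBase m μ δ x ^ (p - 1) * (A * δ ^ 2 + ∑ i, phi' δ (x i) / μ i * v i) := by
  refine ⟨(4 * (p - 1) * (∑ i, ∑ j, |a i j|) / m + 3 * ∑ i, a i i) / (2 * ⨅ i, μ i), ?_,
    fun δ hδ₀ hδ x v => ?_⟩
  · have := ciInf_pos_of_finite hμ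
    have := Finset.sum_nonneg fun i (_ : i ∈ Finset.univ) => ha i
    have : 0 ≤ p - 1 := by linarith
    positivity
  · rw [fderiv_Vpd_apply (lyapBase_pos hμ hδ₀ hδ x).ne', mul_add]
    exact add_le_add (half_traceHess_Vpd_le hμ ha hp hδ₀ hδ x) le_rfl

section Drift

variable {m : ℕ} {μ γ : Fin m → ℝ} {β δ : ℝ} {x u : Fin m → ℝ}

theorem sum_phi'_mul_drift_le (hμ : ∀ i, 0 < μ i) (hγ : ∀ i, 0 ≤ γ i) (hβ : 0 ≤ β)
    (hδ : 0 ≤ δ) (hδγ : δ * (1 + ∑ i, γ i / μ i) ≤ 1) (hu : ∀ i, 0 ≤ u i)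
    (hu₁ : ∑ i, u i = 1) :
    ∑ i, phi' δ (x i) / μ i * drift m μ γ β x u i ≤
      (β + m) * δ ^ 2 - β / m * δ * ∑ i, psi' (δ * x i)
        + ∑ i, min (δ * (x i)⁻) (4 / 9) - δ * ∑ i, (x i)⁺ - δ ^ 2 * ∑ i, (x i)⁻
        + δ * (∑ i, x i)⁺ := by
  have hm : (m : ℝ) ≠ 0 := by
    rintro h
    obtain rfl : m = 0 := by exact_mod_cast h
    simp at hu₁
  set s := (∑ i, x i)⁺
  have hs : 0 ≤ s := posPart_nonneg _
  have hterm (i : Fin m) : phi' δ (x i) / μ i * drift m μ γ β x u i ≤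
      β / m * (δ ^ 2 - δ * psi' (δ * x i))
        + (min (δ * (x i)⁻) (4 / 9) - δ * (x i)⁺ - δ ^ 2 * (x i)⁻ + δ ^ 2)
        + s * δ * u i := by
    have hsplit : phi' δ (x i) / μ i * drift m μ γ β x u i =
        -(β / m) * phi' δ (x i) + -x i * phi' δ (x i)
          + s * (u i * (phi' δ (x i) * (1 - γ i / μ i))) := by
      simp only [drift, show max (∑ j, x j) 0 = s from rfl]
      field_simp [(hμ i).ne']
      ring
    have hγμ : δ * (1 + γ i / μ i) ≤ 1 :=
      (mul_le_mul_of_nonneg_left (add_le_add le_rfl (Finset.single_le_sum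
        (fun j _ => div_nonneg (hγ j) (hμ j).le) (Finset.mem_univ i))) hδ).trans hδγ
    have h₁ : -(β / m) * phi' δ (x i) ≤ β / m * (δ ^ 2 - δ * psi' (δ * x i)) := by
      have : δ * psi' (δ * x i) - δ ^ 2 ≤ phi' δ (x i) := by
        unfold phi'
        nlinarith [psi'_le_one (-x i), sq_nonneg δ]
      have : 0 ≤ β / m := by positivity
      nlinarith
    have h₃ := mul_le_mul_of_nonneg_left (mul_le_mul_of_nonneg_left
      (phi'_mul_one_sub_le hδ (div_nonneg (hγ i) (hμ i).le) hγμ (x i)) (hu i)) hs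
    rw [hsplit]
    linarith [neg_mul_phi'_le hδ (x i)]
  refine (Finset.sum_le_sum fun i _ => hterm i).trans_eq ?_
  simp only [Finset.sum_add_distrib, Finset.sum_sub_distrib, ← Finset.mul_sum, Finset.sum_const,
    Finset.card_univ, Fintype.card_fin, nsmul_eq_mul, hu₁]
  field_simp
  ring

theorem sum_phi'_mul_drift_le_of_pos (hμ : ∀ i, 0 < μ i) (hγ : ∀ i, 0 ≤ γ i) (hβ : 0 ≤ β)
    (hδ : 0 ≤ δ) (hδγ : δ * (1 + ∑ i, γ i / μ i) ≤ 1) (hu : ∀ i, 0 ≤ u i)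
    (hu₁ : ∑ i, u i = 1) (hx : 0 < ∑ i, x i) :
    ∑ i, phi' δ (x i) / μ i * drift m μ γ β x u i ≤ (β + m) * δ ^ 2 - β / m * δ := by
  have h := sum_phi'_mul_drift_le hμ hγ hβ hδ hδγ hu hu₁ (x := x)
  obtain ⟨j, -, hj⟩ := Finset.exists_lt_of_sum_lt (f := 0) (g := x) (by simpa using hx)
  have hψ : 1 ≤ ∑ i, psi' (δ * x i) :=
    (psi'_of_nonneg (mul_nonneg hδ hj.le)).symm.le.trans
      (Finset.single_le_sum (f := fun i => psi' (δ * x i)) (fun i _ => psi'_nonneg _)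
        (Finset.mem_univ j))
  have hmin : ∑ i, min (δ * (x i)⁻) (4 / 9) ≤ δ * ∑ i, (x i)⁻ := by
    rw [Finset.mul_sum]
    exact Finset.sum_le_sum fun i _ => min_le_left _ _
  have hsum : (∑ i, x i)⁺ = ∑ i, (x i)⁺ - ∑ i, (x i)⁻ := by
    rw [posPart_eq_self.2 hx.le, ← Finset.sum_sub_distrib]
    simp only [posPart_sub_negPart]
  have := mul_le_mul_of_nonneg_left hψ (by positivity : 0 ≤ β / m * δ)
  have := Finset.sum_nonneg fun i (_ : i ∈ Finset.univ) => negPart_nonneg (x i)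
  rw [hsum] at h
  nlinarith

theorem sum_phi'_mul_drift_le_of_nonpos (hμ : ∀ i, 0 < μ i) (hγ : ∀ i, 0 ≤ γ i) (hβ : 0 ≤ β)
    (hδ : 0 ≤ δ) (hδγ : δ * (1 + ∑ i, γ i / μ i) ≤ 1) (hu : ∀ i, 0 ≤ u i)
    (hu₁ : ∑ i, u i = 1) (hx : ∑ i, x i ≤ 0) :
    ∑ i, phi' δ (x i) / μ i * drift m μ γ β x u i ≤
      (β + m) * δ ^ 2 + 4 * m / 9 - δ ^ 2 / 2 * ∑ i, |x i| := by
  have h := sum_phi'_mul_drift_le hμ hγ hβ hδ hδγ hu hu₁ (x := x)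
  rw [posPart_eq_zero.2 hx, mul_zero, add_zero] at h
  have hmin : ∑ i, min (δ * (x i)⁻) (4 / 9) ≤ 4 * m / 9 := by
    refine (Finset.sum_le_sum fun i _ => min_le_right _ _).trans_eq ?_
    simp only [Finset.sum_const, Finset.card_univ, Fintype.card_fin, nsmul_eq_mul]
    ring
  have habs : ∑ i, |x i| = ∑ i, (x i)⁺ + ∑ i, (x i)⁻ := by
    simp only [← posPart_add_negPart, Finset.sum_add_distrib]
  have hx' : ∑ i, (x i)⁺ - ∑ i, (x i)⁻ ≤ 0 := by
    rwa [← Finset.sum_sub_distrib, Finset.sum_congr rfl fun i _ => posPart_sub_negPart (x i)]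
  have := mul_nonneg (by positivity : 0 ≤ β / m * δ)
    (Finset.sum_nonneg fun i (_ : i ∈ Finset.univ) => psi'_nonneg (δ * x i))
  have := Finset.sum_nonneg fun i (_ : i ∈ Finset.univ) => posPart_nonneg (x i)
  rw [habs]
  nlinarith [sq_nonneg δ]

theorem sum_phi'_mul_drift_le_const (hμ : ∀ i, 0 < μ i) (hγ : ∀ i, 0 ≤ γ i) (hβ : 0 ≤ β)
    (hδ : 0 ≤ δ) (hδγ : δ * (1 + ∑ i, γ i / μ i) ≤ 1) (hu : ∀ i, 0 ≤ u i)
    (hu₁ : ∑ i, u i = 1) :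
    ∑ i, phi' δ (x i) / μ i * drift m μ γ β x u i ≤ (β + m) * δ ^ 2 + 4 * m / 9 := by
  rcases lt_or_ge 0 (∑ i, x i) with hx | hx
  · have := sum_phi'_mul_drift_le_of_pos hμ hγ hβ hδ hδγ hu hu₁ hx
    have : 0 ≤ β / m * δ := by positivity
    linarith [(by positivity : (0 : ℝ) ≤ 4 * m / 9)]
  · have := sum_phi'_mul_drift_le_of_nonpos hμ hγ hβ hδ hδγ hu hu₁ hx
    have : 0 ≤ δ ^ 2 / 2 * ∑ i, |x i| := by positivity
    linarith

end Drift

theorem eventually_mul_le_nhds_zero (c : ℝ) {d : ℝ} (hd : 0 < d) :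
    ∀ᶠ δ in 𝓝 (0 : ℝ), δ * c ≤ d := by
  have h : Tendsto (fun δ : ℝ => δ * c) (𝓝 0) (𝓝 0) := by
    simpa using (tendsto_id (x := 𝓝 (0 : ℝ))).mul_const c
  exact h.eventually (eventually_le_nhds hd)

theorem exists_drift_le_indicator {m : ℕ} [NeZero m] {μ γ : Fin m → ℝ} (hμ : ∀ i, 0 < μ i)
    (hγ : ∀ i, 0 ≤ γ i) {β : ℝ} (hβ : 0 < β) {A : ℝ} (hA : 0 ≤ A) :
    ∃ δ, 0 < δ ∧ δ ≤ 1 / 2 ∧ ∃ R c : ℝ, 0 ≤ R ∧ 0 ≤ c ∧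
      ∀ x u : Fin m → ℝ, (∀ i, 0 ≤ u i) → ∑ i, u i = 1 →
        A * δ ^ 2 + ∑ i, phi' δ (x i) / μ i * drift m μ γ β x u i + 3 * β / (4 * m) * δ ≤
          {x : Fin m → ℝ | ∑ i, |x i| ≤ R}.indicator (fun _ => c) x := by
  have hm : (0 : ℝ) < m := Nat.cast_pos.2 (NeZero.pos m)
  obtain ⟨δ, ⟨hδ, hδγ, hδA⟩, hδ₀ : 0 < δ⟩ :=
    (((eventually_mul_le_nhds_zero 1 (by norm_num : (0 : ℝ) < 1 / 2)).and
      ((eventually_mul_le_nhds_zero (1 + ∑ i, γ i / μ i) one_pos).and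
        (eventually_mul_le_nhds_zero (β + m + A) (by positivity : 0 < β / (4 * m))))).filter_mono
      nhdsWithin_le_nhds |>.and self_mem_nhdsWithin).exists (f := 𝓝[>] (0 : ℝ))
  set c := (β + m + A) * δ ^ 2 + 4 * m / 9 + 3 * β / (4 * m) * δ with hc
  refine ⟨δ, hδ₀, by linarith, 2 * c / δ ^ 2, c, by positivity, by positivity,
    fun x u hu hu₁ => ?_⟩
  by_cases hx : x ∈ {x : Fin m → ℝ | ∑ i, |x i| ≤ 2 * c / δ ^ 2}
  · rw [Set.indicator_of_mem hx]
    linarith [sum_phi'_mul_drift_le_const hμ hγ hβ.le hδ₀.le hδγ hu hu₁ (x := x)]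
  · rw [Set.indicator_of_notMem hx]
    rcases lt_or_ge 0 (∑ i, x i) with hpos | hnonpos
    · have := sum_phi'_mul_drift_le_of_pos hμ hγ hβ.le hδ₀.le hδγ hu hu₁ hpos
      have : β / m - 3 * β / (4 * m) = β / (4 * m) := by field_simp; ring
      nlinarith [mul_le_mul_of_nonneg_right hδA hδ₀.le]
    · have := sum_phi'_mul_drift_le_of_nonpos hμ hγ hβ.le hδ₀.le hδγ hu hu₁ hnonpos
      have : δ ^ 2 / 2 * (2 * c / δ ^ 2) = c := by field_simp
      have hx : 2 * c / δ ^ 2 < ∑ i, |x i| := not_le.1 hx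
      nlinarith [mul_lt_mul_of_pos_left hx (by positivity : 0 < δ ^ 2 / 2)]

theorem isCompact_sum_abs_le {ι : Type*} [Fintype ι] (R : ℝ) :
    IsCompact {x : ι → ℝ | ∑ i, |x i| ≤ R} := by
  refine Metric.isCompact_of_isClosed_isBounded
    (isClosed_le (continuous_finsetSum _ fun i _ => (continuous_apply i).abs) continuous_const)
    (isBounded_iff_forall_norm_le.2 ⟨R, fun x (hx : ∑ i, |x i| ≤ R) => ?_⟩)
  refine ((pi_norm_le_iff_of_nonneg (Finset.sum_nonneg fun i _ => abs_nonneg (x i))).2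
    fun i => ?_).trans hx
  exact Real.norm_eq_abs (x i) ▸
    Finset.single_le_sum (fun j _ => abs_nonneg (x j)) (Finset.mem_univ i)

/-- Assume `β̃ > 0`. For every `p > 1` there exist `δ ∈ (0,1]`, a constant
`C̃₀' > 0` and a compact set `K' ⊂ ℝ^m` such that
`ℒ^u 𝒱_{p,δ}(x) ≤ C̃₀' 1_{K'}(x) - pδ (3β̃/(4m)) 𝒱_{p-1,δ}(x)` for all `x` and all
`u ∈ Δ`, where `ℒ^u f(x) = (1/2) trace(σσᵀ ∇²f(x)) + ⟨b̃(x,u), ∇f(x)⟩`. -/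
theorem stmt_15 (m : ℕ) (hm : 1 ≤ m) (μ γ : Fin m → ℝ)
    (hμ : ∀ i, 0 < μ i) (hγ : ∀ i, 0 ≤ γ i)
    (βt : ℝ) (hβ : 0 < βt)
    (σ : Matrix (Fin m) (Fin m) ℝ)
    (p : ℝ) (hp : 1 < p) :
    ∃ δ : ℝ, 0 < δ ∧ δ ≤ 1 ∧ ∃ C : ℝ, 0 < C ∧ ∃ K : Set (Fin m → ℝ), IsCompact K ∧
      ∀ x u : Fin m → ℝ, (∀ i, 0 ≤ u i) → ∑ i, u i = 1 →
        (1 / 2) * traceHess m (σ * σ.transpose) (Vpd m μ δ p) x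
            + fderiv ℝ (Vpd m μ δ p) x (drift m μ γ βt x u) ≤
          K.indicator (fun _ => C) x
            - p * δ * (3 * βt / (4 * (m : ℝ))) * Vpd m μ δ (p - 1) x := by
  have : NeZero m := ⟨by omega⟩
  have ha (i : Fin m) : 0 ≤ (σ * σ.transpose) i i := by
    simpa [Matrix.conjTranspose_eq_transpose_of_trivial] using
      (Matrix.posSemidef_self_mul_conjTranspose σ).diag_nonneg (i := i)
  obtain ⟨A, hA, hgen⟩ := exists_generator_Vpd_le hμ ha hp.le
  obtain ⟨δ, hδ₀, hδ, R, c, hR, hc, hdrift⟩ := exists_drift_le_indicator hμ hγ hβ hA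
  have := ciInf_pos_of_finite hμ
  have hp₀ : 0 < p := by linarith
  set K := {x : Fin m → ℝ | ∑ i, |x i| ≤ R}
  set C := p * ((R + m) / ⨅ i, μ i) ^ (p - 1) * c + 1
  refine ⟨δ, hδ₀, by linarith, C, by positivity, K, isCompact_sum_abs_le R, fun x u hu hu₁ => ?_⟩
  have := lyapBase_pos hμ hδ₀.le hδ x
  have hFp : 0 ≤ p * lyapBase m μ δ x ^ (p - 1) := by positivity
  have hK : p * lyapBase m μ δ x ^ (p - 1) * K.indicator (fun _ => c) x ≤
      K.indicator (fun _ => C) x := by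
    by_cases hx : x ∈ K
    · simp only [Set.indicator_of_mem hx, C]
      have := lyapBase_rpow_le hμ hδ₀.le hδ (by linarith : 0 ≤ p - 1) hx
      nlinarith [mul_le_mul_of_nonneg_left this hp₀.le]
    · simp [hx]
  change _ ≤ _ - _ * lyapBase m μ δ x ^ (p - 1)
  linarith [hgen δ hδ₀.le hδ x (drift m μ γ βt x u),
    mul_le_mul_of_nonneg_left (hdrift x u hu hu₁) hFp]

end
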